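/- Let R₁ and R₂ be finite sets (Finsets) of elements of types α and β respectively, let k₁ : α → K and k₂ : β → K be the join key attributes, and let p : K → Prop be a decidable predicate (the hash condition). Then hashing the equality-join key can be pushed down to both operands: { (x, y) ∈ R₁ × R₂ : k₁ x = k₂ y and p (k₁ x) } = { (x, y) ∈ R₁' × R₂' : k₁ x = k₂ y }, where R₁' = {x ∈ R₁ : p (k₁ x)} and R₂' = {y ∈ R₂ : p (k₂ y)}. -/
import Mathlib

/-- Hash push-down through an equality join: hashing the join key on the join result
equals joining the two operands each pre-filtered by the hash condition on its key. -/
theorem stmt_9 {α β K : Type*} [DecidableEq α] [DecidableEq β] [DecidableEq K]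
    (R₁ : Finset α) (R₂ : Finset β) (k₁ : α → K) (k₂ : β → K)
    (p : K → Prop) [DecidablePred p] :
    (R₁ ×ˢ R₂).filter (fun z => k₁ z.1 = k₂ z.2 ∧ p (k₁ z.1)) =
      ((R₁.filter (fun x => p (k₁ x))) ×ˢ (R₂.filter (fun y => p (k₂ y)))).filter
        (fun z => k₁ z.1 = k₂ z.2) := by
  ext ⟨x, y⟩
  simp only [Finset.mem_filter, Finset.mem_product]
  constructor
  · rintro ⟨⟨h1, h2⟩, he, hp⟩
    exact ⟨⟨⟨h1, hp⟩, h2, he ▸ hp⟩, he⟩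
  · rintro ⟨⟨⟨h1, hp⟩, h2, _⟩, he⟩
    exact ⟨⟨h1, h2⟩, he, hp⟩
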